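/- Suppose c satisfies (A0), (A1), (A2), and let x_m ∈ Ω and y₀, y₁ ∈ Λ be joined by a c-segment [y₀,y₁]_{x_m} lying in Λ. If Strict Monotonicity holds (S⁺_{θ₁} ⊆ S⁺_{θ₂} whenever 0 ≤ θ₁ ≤ θ₂ ≤ 1, and S_{θ₁} ∩ S_{θ₂} = {x_m} whenever 0 ≤ θ₁ < θ₂ ≤ 1), then Strict DASM holds: f_θ(x) ≤ max(f₀(x), f₁(x)) for all θ ∈ (0,1) and all x ∈ Ω, with strict inequality whenever x ≠ x_m. -/

import Mathlib

open scoped RealInnerProductSpace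
open Filter Topology Set

noncomputable section

variable {n : ℕ}

local notation "E" => EuclideanSpace ℝ (Fin n)

/-- `-∇ₓ c(x,y)`, the negative gradient of `x' ↦ c(x',y)` at `x`. -/
def negGradX (c : E → E → ℝ) (x y : E) : E :=
  -(gradient (fun x' => c x' y) x)

/-- `-∇_y c(x,y)`, the negative gradient of `y' ↦ c(x,y')` at `y`. -/
def negGradY (c : E → E → ℝ) (x y : E) : E :=
  -(gradient (fun y' => c x y') y)

/-- The swapped cost `c*(y,x) = c(x,y)`. -/
def cStar (c : E → E → ℝ) : E → E → ℝ := fun y x => c x y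

/-- The domain of the `c`-exponential map at `x`: `{-∇ₓ c(x,y) : y ∈ Λ}`. -/
def cExpDom (c : E → E → ℝ) (Λ : Set E) (x : E) : Set E :=
  (fun y => negGradX c x y) '' Λ

/-- The `c`-exponential map: `cExp c Λ x p` is the point `y ∈ Λ` with `p = -∇ₓ c(x,y)`
(when it exists and is unique). -/
def cExp (c : E → E → ℝ) (Λ : Set E) (x p : E) : E :=
  Function.invFunOn (fun y => negGradX c x y) Λ p

/-- Condition (A0): the cost extends to a `C⁴` function on `cl Ω × cl Λ`. -/
def A0 (c : E → E → ℝ) (Ω Λ : Set E) : Prop :=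
  ContDiffOn ℝ 4 (fun q : E × E => c q.1 q.2) (closure Ω ×ˢ closure Λ)

/-- Condition (A1): injectivity of `y ↦ -∇ₓ c(x,y)` on `cl Λ` and of
`x ↦ -∇_y c(x,y)` on `cl Ω`. -/
def A1 (c : E → E → ℝ) (Ω Λ : Set E) : Prop :=
  (∀ x ∈ Ω, Set.InjOn (fun y => negGradX c x y) (closure Λ)) ∧
  (∀ y ∈ Λ, Set.InjOn (fun x => negGradY c x y) (closure Ω))

/-- Condition (A2): the mixed second derivative `D²ₓᵧ c(x,y)`, as a linear map, is
invertible for all `(x,y) ∈ cl Ω × cl Λ`. -/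
def A2 (c : E → E → ℝ) (Ω Λ : Set E) : Prop :=
  ∀ x ∈ closure Ω, ∀ y ∈ closure Λ,
    Function.Bijective (fderiv ℝ (fun y' => negGradX c x y') y)

/-- The `c`-sectional curvature
`𝔖_c(x,y)(η,ξ) = (d²/dt²)|₀ [-D²ₓₓ c](x, cExpₓ(p + tξ))(η,η)` with `p = -∇ₓ c(x,y)`. -/
def cSectional (c : E → E → ℝ) (Λ : Set E) (x y η ξ : E) : ℝ :=
  deriv (deriv (fun t : ℝ =>
    -(iteratedFDeriv ℝ 2
        (fun x' => c x' (cExp c Λ x (negGradX c x y + t • ξ))) x ![η, η]))) 0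

/-- Condition (A3W): nonnegative `c`-sectional curvature in orthogonal directions. -/
def A3W (c : E → E → ℝ) (Ω Λ : Set E) : Prop :=
  ∀ x ∈ Ω, ∀ y ∈ Λ, ∀ η ξ : E, ⟪η, ξ⟫ = 0 → 0 ≤ cSectional c Λ x y η ξ

/-- Condition (A3S): uniformly positive `c`-sectional curvature in orthogonal directions. -/
def A3S (c : E → E → ℝ) (Ω Λ : Set E) : Prop :=
  ∃ C₀ > (0:ℝ), ∀ x ∈ Ω, ∀ y ∈ Λ, ∀ η ξ : E, ⟪η, ξ⟫ = 0 →
    C₀ * ‖η‖ ^ 2 * ‖ξ‖ ^ 2 ≤ cSectional c Λ x y η ξ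

/-- `Λ` is `c`-convex with respect to `Ω`: `(cExpₓ)⁻¹(Λ)` is convex for every `x ∈ Ω`. -/
def CConvexTarget (c : E → E → ℝ) (Ω Λ : Set E) : Prop :=
  ∀ x ∈ Ω, Convex ℝ (cExpDom c Λ x)

/-- `Ω` is `c*`-convex with respect to `Λ`: `(c*Exp_y)⁻¹(Ω)` is convex for every `y ∈ Λ`. -/
def CStarConvexSource (c : E → E → ℝ) (Ω Λ : Set E) : Prop :=
  ∀ y ∈ Λ, Convex ℝ ((fun x => negGradY c x y) '' Ω)

/-- The `c`-Legendre transform `L^c v(x) = sup_{y ∈ Λ} (-c(x,y) - v(y))`. -/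
def cTransform (c : E → E → ℝ) (Λ : Set E) (v : E → EReal) (x : E) : EReal :=
  ⨆ y ∈ Λ, (((-(c x y) : ℝ) : EReal) - v y)

/-- `φ` is a `c`-convex function on `Ω` indexed by `Λ`. -/
def IsCConvexOn (c : E → E → ℝ) (Ω Λ : Set E) (φ : E → ℝ) : Prop :=
  ∃ v : E → EReal,
    (∀ x ∈ Ω, (φ x : EReal) = cTransform c Λ v x) ∧
    (∀ x ∈ Ω, ∃ y ∈ closure Λ, (φ x : EReal) + v y = ((-(c x y) : ℝ) : EReal))

/-- The `c*`-Legendre transform `L^{c*} φ(y) = sup_{x ∈ Ω} (-c(x,y) - φ(x))`. -/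
def cStarTransform (c : E → E → ℝ) (Ω : Set E) (φ : E → ℝ) (y : E) : EReal :=
  ⨆ x ∈ Ω, (((-(c x y) - φ x : ℝ)) : EReal)

/-- The contact set `G_φ(x) = {y ∈ cl Λ : φ(x) + L^{c*}φ(y) = -c(x,y)}`. -/
def contactSet (c : E → E → ℝ) (Ω Λ : Set E) (φ : E → ℝ) (x : E) : Set E :=
  {y ∈ closure Λ | (φ x : EReal) + cStarTransform c Ω φ y = ((-(c x y) : ℝ) : EReal)}

/-- The (local) subdifferential `∂φ(x)`:
`φ(z) ≥ φ(x) + ⟨p, z - x⟩ + o(‖z - x‖)` as `z → x` in `Ω`. -/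
def subdiff (Ω : Set E) (φ : E → ℝ) (x : E) : Set E :=
  {p : E | ∀ ε > (0:ℝ), ∀ᶠ z in 𝓝[Ω] x,
      φ x + ⟪p, z - x⟫ - ε * ‖z - x‖ ≤ φ z}

/-- The `c`-subdifferential `∂^c φ(x) = {-∇ₓ c(x,y) : y ∈ G_φ(x)}`. -/
def cSubdiff (c : E → E → ℝ) (Ω Λ : Set E) (φ : E → ℝ) (x : E) : Set E :=
  (fun y => negGradX c x y) '' contactSet c Ω Λ φ x

/-- The straight segment `p_θ = (1-θ) p₀ + θ p₁` with `pᵢ = -∇ₓ c(x_m, yᵢ)`. -/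
def pSeg (c : E → E → ℝ) (xm y₀ y₁ : E) (θ : ℝ) : E :=
  (1 - θ) • negGradX c xm y₀ + θ • negGradX c xm y₁

/-- The `c`-segment `y_θ = cExp_{x_m}(p_θ)` joining `y₀` to `y₁` with respect to `x_m`. -/
def ySeg (c : E → E → ℝ) (Λ : Set E) (xm y₀ y₁ : E) (θ : ℝ) : E :=
  cExp c Λ xm (pSeg c xm y₀ y₁ θ)

/-- The sliding mountain `f_θ(x) = -c(x, y_θ) + c(x_m, y_θ)`. -/
def slide (c : E → E → ℝ) (Λ : Set E) (xm y₀ y₁ : E) (θ : ℝ) (x : E) : ℝ :=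
  -(c x (ySeg c Λ xm y₀ y₁ θ)) + c xm (ySeg c Λ xm y₀ y₁ θ)

/-- The `c`-segment `[y₀,y₁]_{x_m}` lies in `Λ`:
each `p_θ`, `θ ∈ [0,1]`, is in the domain of `cExp_{x_m}`. -/
def segInTarget (c : E → E → ℝ) (Λ : Set E) (xm y₀ y₁ : E) : Prop :=
  ∀ θ ∈ Set.Icc (0:ℝ) 1, pSeg c xm y₀ y₁ θ ∈ cExpDom c Λ xm

/-- The level set `S_θ = {x ∈ Ω : (d/dθ) f_θ(x) = 0}`. -/
def Slevel (c : E → E → ℝ) (Ω Λ : Set E) (xm y₀ y₁ : E) (θ : ℝ) : Set E :=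
  {x ∈ Ω | deriv (fun θ' => slide c Λ xm y₀ y₁ θ' x) θ = 0}

/-- The super-level set `S⁺_θ = {x ∈ Ω : (d/dθ) f_θ(x) ≥ 0}`. -/
def Splus (c : E → E → ℝ) (Ω Λ : Set E) (xm y₀ y₁ : E) (θ : ℝ) : Set E :=
  {x ∈ Ω | 0 ≤ deriv (fun θ' => slide c Λ xm y₀ y₁ θ' x) θ}

/-!
For fixed `x ≠ x_m`, put `g(θ) = f_θ(x)`. Monotonicity says that once `g'` is nonnegative it stays
nonnegative, and strictness says that `g'` vanishes at most once on `[0,1]`. Hence if `g'(θ) < 0`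
then `g' < 0` on `(0,θ)` and `g(θ) < g(0)`, while if `g'(θ) ≥ 0` then `g' > 0` on `(θ,1)` off a
single point and `g(θ) < g(1)`. The mean value arguments need `g` continuous up to the endpoints,
i.e. continuity of the `c`-segment; this follows from the inverse function theorem applied to the
injective map `y ↦ -∇ₓc(x_m,y)`, whose derivative is invertible by (A2).
-/

section InverseFunction

variable {𝕜 : Type*} [NontriviallyNormedField 𝕜]
  {F G : Type*} [NormedAddCommGroup F] [NormedSpace 𝕜 F] [CompleteSpace F]
  [NormedAddCommGroup G] [NormedSpace 𝕜 G]

theorem Set.InjOn.continuousOn_invFunOn_image {f : F → G} {s : Set F} (hs : IsOpen s)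
    (hinj : InjOn f s)
    (hf : ∀ a ∈ s, ∃ f' : F ≃L[𝕜] G, HasStrictFDerivAt f (f' : F →L[𝕜] G) a) :
    ContinuousOn (Function.invFunOn f s) (f '' s) := by
  rintro _ ⟨a, ha, rfl⟩
  obtain ⟨f', hfa⟩ := hf a ha
  set g := hfa.localInverse f f' a
  have hg_mem : ∀ᶠ q in 𝓝 (f a), g q ∈ s := hfa.localInverse_tendsto (hs.mem_nhds ha)
  have heq : Function.invFunOn f s =ᶠ[𝓝[f '' s] (f a)] g := by
    filter_upwards [nhdsWithin_le_nhds (hg_mem.and hfa.eventually_right_inverse),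
      self_mem_nhdsWithin] with q ⟨hgq, hfgq⟩ ⟨z, hz, hzq⟩
    subst hzq
    rw [hinj.leftInvOn_invFunOn hz]
    exact hinj hz hgq hfgq.symm
  exact hfa.localInverse_continuousAt.continuousWithinAt.congr_of_eventuallyEq heq
    ((hinj.leftInvOn_invFunOn ha).trans hfa.localInverse_apply_image.symm)

end InverseFunction

section MeanValue

variable {g : ℝ → ℝ} {a b : ℝ}

theorem lt_of_deriv_pos_on_Ioo (hab : a < b) (hg : ContinuousOn g (Icc a b))
    (hpos : ∀ s ∈ Ioo a b, 0 < deriv g s) : g a < g b :=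
  strictMonoOn_of_deriv_pos (convex_Icc a b) hg (by rwa [interior_Icc])
    (left_mem_Icc.2 hab.le) (right_mem_Icc.2 hab.le) hab

theorem lt_of_deriv_neg_on_Ioo (hab : a < b) (hg : ContinuousOn g (Icc a b))
    (hneg : ∀ s ∈ Ioo a b, deriv g s < 0) : g b < g a :=
  strictAntiOn_of_deriv_neg (convex_Icc a b) hg (by rwa [interior_Icc])
    (left_mem_Icc.2 hab.le) (right_mem_Icc.2 hab.le) hab

theorem lt_of_deriv_nonneg_of_subsingleton_zeros (hab : a < b) (hg : ContinuousOn g (Icc a b))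
    (hnonneg : ∀ s ∈ Ioo a b, 0 ≤ deriv g s)
    (hzeros : {s ∈ Ioo a b | deriv g s = 0}.Subsingleton) : g a < g b := by
  by_cases hzero : ∃ s₀ ∈ Ioo a b, deriv g s₀ = 0
  · obtain ⟨s₀, hs₀, hgs₀⟩ := hzero
    have hpos : ∀ s ∈ Ioo a b, s ≠ s₀ → 0 < deriv g s := fun s hs hne =>
      (hnonneg s hs).lt_of_ne' fun h => hne (hzeros ⟨hs, h⟩ ⟨hs₀, hgs₀⟩)
    calc g a < g s₀ :=
          lt_of_deriv_pos_on_Ioo hs₀.1 (hg.mono (Icc_subset_Icc_right hs₀.2.le))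
            fun s hs => hpos s ⟨hs.1, hs.2.trans hs₀.2⟩ hs.2.ne
      _ < g b :=
          lt_of_deriv_pos_on_Ioo hs₀.2 (hg.mono (Icc_subset_Icc_left hs₀.1.le))
            fun s hs => hpos s ⟨hs₀.1.trans hs.1, hs.2⟩ hs.1.ne'
  · push Not at hzero
    exact lt_of_deriv_pos_on_Ioo hab hg fun s hs => (hnonneg s hs).lt_of_ne' (hzero s hs)

theorem lt_max_of_deriv_changes_sign_once (hg : ContinuousOn g (Icc a b))
    (hmono : ∀ s t, a ≤ s → s ≤ t → t ≤ b → 0 ≤ deriv g s → 0 ≤ deriv g t)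
    (hstrict : ∀ s t, a ≤ s → s < t → t ≤ b → deriv g s = 0 → deriv g t ≠ 0)
    {θ : ℝ} (hθ : θ ∈ Ioo a b) : g θ < max (g a) (g b) := by
  rcases lt_or_ge (deriv g θ) 0 with hneg | hnonneg
  · refine lt_max_of_lt_left <| lt_of_deriv_neg_on_Ioo hθ.1
      (hg.mono (Icc_subset_Icc_right hθ.2.le)) fun s hs => ?_
    by_contra! h
    exact hneg.not_ge (hmono s θ hs.1.le hs.2.le hθ.2.le h)
  · refine lt_max_of_lt_right <| lt_of_deriv_nonneg_of_subsingleton_zeros hθ.2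
      (hg.mono (Icc_subset_Icc_left hθ.1.le))
      (fun s hs => hmono θ s hθ.1.le hs.1.le hs.2.le hnonneg) ?_
    rintro s ⟨hs, hs0⟩ t ⟨ht, ht0⟩
    by_contra hst
    rcases lt_or_gt_of_ne hst with h | h
    · exact hstrict s t (hθ.1.trans hs.1).le h ht.2.le hs0 ht0
    · exact hstrict t s (hθ.1.trans ht.1).le h hs.2.le ht0 hs0

end MeanValue

theorem A0.contDiffAt {c : E → E → ℝ} {Ω Λ : Set E} (h0 : A0 c Ω Λ) (hΩ : IsOpen Ω)
    (hΛ : IsOpen Λ) {x y : E} (hx : x ∈ Ω) (hy : y ∈ Λ) :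
    ContDiffAt ℝ 4 (fun q : E × E => c q.1 q.2) (x, y) :=
  ContDiffOn.contDiffAt h0 <| mem_of_superset ((hΩ.prod hΛ).mem_nhds (mk_mem_prod hx hy))
    (prod_mono subset_closure subset_closure)

theorem contDiffAt_negGradX {c : E → E → ℝ} {Ω Λ : Set E} (h0 : A0 c Ω Λ) (hΩ : IsOpen Ω)
    (hΛ : IsOpen Λ) {x y : E} (hx : x ∈ Ω) (hy : y ∈ Λ) : ContDiffAt ℝ 1 (negGradX c x) y := by
  have hc : ContDiffAt ℝ 4 (Function.uncurry fun y' x' => c x' y') (y, x) :=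
    (h0.contDiffAt hΩ hΛ hx hy).comp (y, x) (contDiffAt_snd.prodMk contDiffAt_fst)
  have hderiv : ContDiffAt ℝ 1 (fun y' => fderiv ℝ (fun x' => c x' y') x) y :=
    hc.fderiv (g := fun _ => x) contDiffAt_const (by norm_num)
  exact ((InnerProductSpace.toDual ℝ E).symm.contDiff.contDiffAt.comp y hderiv).neg

theorem exists_hasStrictFDerivAt_negGradX {c : E → E → ℝ} {Ω Λ : Set E}
    (h0 : A0 c Ω Λ) (h2 : A2 c Ω Λ) (hΩ : IsOpen Ω) (hΛ : IsOpen Λ) {x y : E}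
    (hx : x ∈ Ω) (hy : y ∈ Λ) :
    ∃ L : E ≃L[ℝ] E, HasStrictFDerivAt (negGradX c x) (L : E →L[ℝ] E) y :=
  ⟨(LinearEquiv.ofBijective _
      (h2 x (subset_closure hx) y (subset_closure hy))).toContinuousLinearEquiv,
    (contDiffAt_negGradX h0 hΩ hΛ hx hy).hasStrictFDerivAt one_ne_zero⟩

theorem continuousOn_cExp {c : E → E → ℝ} {Ω Λ : Set E} (h0 : A0 c Ω Λ) (h1 : A1 c Ω Λ)
    (h2 : A2 c Ω Λ) (hΩ : IsOpen Ω) (hΛ : IsOpen Λ) {x : E} (hx : x ∈ Ω) :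
    ContinuousOn (cExp c Λ x) (cExpDom c Λ x) :=
  ((h1.1 x hx).mono subset_closure).continuousOn_invFunOn_image hΛ
    fun _ hy => exists_hasStrictFDerivAt_negGradX h0 h2 hΩ hΛ hx hy

theorem mapsTo_ySeg {c : E → E → ℝ} {Λ : Set E} {xm y₀ y₁ : E}
    (hseg : segInTarget c Λ xm y₀ y₁) : MapsTo (ySeg c Λ xm y₀ y₁) (Icc 0 1) Λ :=
  fun θ hθ => Function.invFunOn_mem (hseg θ hθ)

theorem continuousOn_ySeg {c : E → E → ℝ} {Ω Λ : Set E} {xm y₀ y₁ : E}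
    (h0 : A0 c Ω Λ) (h1 : A1 c Ω Λ) (h2 : A2 c Ω Λ) (hΩ : IsOpen Ω) (hΛ : IsOpen Λ)
    (hxm : xm ∈ Ω) (hseg : segInTarget c Λ xm y₀ y₁) :
    ContinuousOn (ySeg c Λ xm y₀ y₁) (Icc 0 1) :=
  (continuousOn_cExp h0 h1 h2 hΩ hΛ hxm).comp
    (by unfold pSeg; fun_prop : Continuous (pSeg c xm y₀ y₁)).continuousOn hseg

theorem continuousOn_slide {c : E → E → ℝ} {Ω Λ : Set E} {xm y₀ y₁ : E}
    (h0 : A0 c Ω Λ) (h1 : A1 c Ω Λ) (h2 : A2 c Ω Λ) (hΩ : IsOpen Ω)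
    (hΛ : IsOpen Λ) (hxm : xm ∈ Ω) (hseg : segInTarget c Λ xm y₀ y₁) {x : E} (hx : x ∈ Ω) :
    ContinuousOn (fun θ => slide c Λ xm y₀ y₁ θ x) (Icc 0 1) := by
  have hc : ∀ x' ∈ Ω, ContinuousOn (fun θ => c x' (ySeg c Λ xm y₀ y₁ θ)) (Icc 0 1) :=
    fun x' hx' => h0.continuousOn.comp
      (continuousOn_const.prodMk (continuousOn_ySeg h0 h1 h2 hΩ hΛ hxm hseg))
      fun θ hθ => ⟨subset_closure hx', subset_closure (mapsTo_ySeg hseg hθ)⟩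
  exact (hc x hx).neg.add (hc xm hxm)

theorem statement7_general (c : E → E → ℝ) (Ω Λ : Set E) (hΩ : IsOpen Ω) (hΛ : IsOpen Λ)
    (h0 : A0 c Ω Λ) (h1 : A1 c Ω Λ) (h2 : A2 c Ω Λ)
    (xm : E) (hxm : xm ∈ Ω) (y₀ : E) (y₁ : E)
    (hseg : segInTarget c Λ xm y₀ y₁)
    (hmono : ∀ θ₁ θ₂ : ℝ, 0 ≤ θ₁ → θ₁ ≤ θ₂ → θ₂ ≤ 1 →
      Splus c Ω Λ xm y₀ y₁ θ₁ ⊆ Splus c Ω Λ xm y₀ y₁ θ₂)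
    (hstrict : ∀ θ₁ θ₂ : ℝ, 0 ≤ θ₁ → θ₁ < θ₂ → θ₂ ≤ 1 →
      Slevel c Ω Λ xm y₀ y₁ θ₁ ∩ Slevel c Ω Λ xm y₀ y₁ θ₂ = {xm}) :
    ∀ θ ∈ Set.Ioo (0:ℝ) 1, ∀ x ∈ Ω,
      slide c Λ xm y₀ y₁ θ x ≤
        max (slide c Λ xm y₀ y₁ 0 x) (slide c Λ xm y₀ y₁ 1 x) ∧
      (x ≠ xm → slide c Λ xm y₀ y₁ θ x <
        max (slide c Λ xm y₀ y₁ 0 x) (slide c Λ xm y₀ y₁ 1 x)) := by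
  intro θ hθ x hx
  rcases eq_or_ne x xm with rfl | hne
  · simp [slide]
  have hlt : slide c Λ xm y₀ y₁ θ x < max (slide c Λ xm y₀ y₁ 0 x) (slide c Λ xm y₀ y₁ 1 x) :=
    lt_max_of_deriv_changes_sign_once (g := fun θ => slide c Λ xm y₀ y₁ θ x)
      (continuousOn_slide h0 h1 h2 hΩ hΛ hxm hseg hx)
      (fun s t hs hst ht hgs => (hmono s t hs hst ht ⟨hx, hgs⟩).2)
      (fun s t hs hst ht hgs hgt => hne <| by
        have hboth : x ∈ Slevel c Ω Λ xm y₀ y₁ s ∩ Slevel c Ω Λ xm y₀ y₁ t :=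
          ⟨⟨hx, hgs⟩, ⟨hx, hgt⟩⟩
        rwa [hstrict s t hs hst ht] at hboth)
      hθ
  exact ⟨hlt.le, fun _ => hlt⟩

theorem statement7 (c : E → E → ℝ) (Ω Λ : Set E) (hΩ : IsOpen Ω) (hΛ : IsOpen Λ)
    (h0 : A0 c Ω Λ) (h1 : A1 c Ω Λ) (h2 : A2 c Ω Λ)
    (xm : E) (hxm : xm ∈ Ω) (y₀ : E) (hy₀ : y₀ ∈ Λ) (y₁ : E) (hy₁ : y₁ ∈ Λ)
    (hseg : segInTarget c Λ xm y₀ y₁)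
    (hmono : ∀ θ₁ θ₂ : ℝ, 0 ≤ θ₁ → θ₁ ≤ θ₂ → θ₂ ≤ 1 →
      Splus c Ω Λ xm y₀ y₁ θ₁ ⊆ Splus c Ω Λ xm y₀ y₁ θ₂)
    (hstrict : ∀ θ₁ θ₂ : ℝ, 0 ≤ θ₁ → θ₁ < θ₂ → θ₂ ≤ 1 →
      Slevel c Ω Λ xm y₀ y₁ θ₁ ∩ Slevel c Ω Λ xm y₀ y₁ θ₂ = {xm}) :
    ∀ θ ∈ Set.Ioo (0:ℝ) 1, ∀ x ∈ Ω,
      slide c Λ xm y₀ y₁ θ x ≤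
        max (slide c Λ xm y₀ y₁ 0 x) (slide c Λ xm y₀ y₁ 1 x) ∧
      (x ≠ xm → slide c Λ xm y₀ y₁ θ x <
        max (slide c Λ xm y₀ y₁ 0 x) (slide c Λ xm y₀ y₁ 1 x)) :=
  statement7_general c Ω Λ hΩ hΛ h0 h1 h2 xm hxm y₀ y₁ hseg hmono hstrict

end
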